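/- arXiv:2402.15413 — 4 statements merged into one kernel-verified Lean document; each statement's English description precedes it below -/
import Mathlib

section
/- A function h from n-tuples of vectors in ℝ^d to ℝ is O(d)-invariant (i.e. h (g • X) = h X for all g in O(d) and all tuples X) if and only if there exists a function f from n×n real matrices to ℝ such that h X = f (Gram X) for every tuple X, where Gram X is the matrix of pairwise Euclidean inner products of the entries of X. -/
/-!
Two tuples with the same Gram matrix differ by an orthogonal transformation: the norm of a linear
combination `∑ cᵢ Xᵢ` is computed from the Gram matrix alone, so `∑ cᵢ Xᵢ ↦ ∑ cᵢ Yᵢ` is a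
well-defined isometry from the span of the `Xᵢ` into `ℝ^d`, and it extends to an isometry of all
of `ℝ^d`. An `O(d)`-invariant function is therefore constant on the fibres of `Gram`, i.e. it
factors through `Gram`; conversely `Gram` itself is `O(d)`-invariant.
-/

open Matrix

/-- The Gram matrix of a tuple of vectors: entries are pairwise Euclidean inner products. -/
def Gram {d n : ℕ} (X : Fin n → (Fin d → ℝ)) : Matrix (Fin n) (Fin n) ℝ :=
  Matrix.of fun i j => ∑ k, X i k * X j k

section GramIsometry

open scoped InnerProductSpace ComplexConjugate

variable {𝕜 V ι : Type*} [RCLike 𝕜] [NormedAddCommGroup V] [InnerProductSpace 𝕜 V] [Fintype ι]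

theorem inner_linearCombination_linearCombination (v : ι → V) (a b : ι → 𝕜) :
    ⟪Fintype.linearCombination 𝕜 v a, Fintype.linearCombination 𝕜 v b⟫_𝕜 =
      ∑ i, ∑ j, conj (a i) * b j * gram 𝕜 v i j := by
  simp only [Fintype.linearCombination_apply, sum_inner, inner_sum, inner_smul_left,
    inner_smul_right, gram_apply, Finset.mul_sum]
  rw [Finset.sum_comm]
  exact Finset.sum_congr rfl fun i _ => Finset.sum_congr rfl fun j _ => by ring

theorem norm_linearCombination_eq_of_gram_eq {v w : ι → V} (hvw : gram 𝕜 v = gram 𝕜 w)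
    (c : ι → 𝕜) :
    ‖Fintype.linearCombination 𝕜 v c‖ = ‖Fintype.linearCombination 𝕜 w c‖ := by
  rw [norm_eq_sqrt_re_inner (𝕜 := 𝕜), norm_eq_sqrt_re_inner (𝕜 := 𝕜),
    inner_linearCombination_linearCombination, inner_linearCombination_linearCombination, hvw]

theorem exists_linearIsometry_range_of_gram_eq {v w : ι → V} (hvw : gram 𝕜 v = gram 𝕜 w) :
    ∃ L : LinearMap.range (Fintype.linearCombination 𝕜 v) →ₗᵢ[𝕜] V,
      ∀ c, L ⟨_, LinearMap.mem_range_self _ c⟩ = Fintype.linearCombination 𝕜 w c := by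
  set φ := Fintype.linearCombination 𝕜 v
  set ψ := Fintype.linearCombination 𝕜 w
  have hnorm := norm_linearCombination_eq_of_gram_eq hvw
  have hker : LinearMap.ker φ ≤ LinearMap.ker ψ := fun c hc => by
    rw [LinearMap.mem_ker, ← norm_eq_zero] at hc ⊢
    rwa [← hnorm]
  set τ := (LinearMap.ker φ).liftQ ψ hker ∘ₗ φ.quotKerEquivRange.symm.toLinearMap
  have hτ : ∀ c, τ ⟨φ c, LinearMap.mem_range_self φ c⟩ = ψ c := fun c => by
    simp [τ, φ.quotKerEquivRange_symm_apply_image c]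
  refine ⟨⟨τ, ?_⟩, hτ⟩
  rintro ⟨_, c, rfl⟩
  rw [hτ, ← hnorm]
  rfl

theorem exists_linearIsometry_comp_eq_of_gram_eq [FiniteDimensional 𝕜 V] {v w : ι → V}
    (hvw : gram 𝕜 v = gram 𝕜 w) : ∃ L : V →ₗᵢ[𝕜] V, L ∘ v = w := by
  classical
  obtain ⟨L, hL⟩ := exists_linearIsometry_range_of_gram_eq hvw
  refine ⟨L.extend, funext fun i => ?_⟩
  simpa using (L.extend_apply _).trans (hL (Pi.single i 1))

end GramIsometry

section Orthogonal

variable {m R : Type*} [Fintype m] [DecidableEq m] [CommSemiring R]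

theorem Matrix.transpose_mul_self_eq_one_of_dotProduct_mulVec {g : Matrix m m R}
    (hg : ∀ v w, g *ᵥ v ⬝ᵥ g *ᵥ w = v ⬝ᵥ w) : gᵀ * g = 1 := by
  ext i j
  simpa [mulVec_single_one, Matrix.mul_apply, dotProduct, one_apply, Pi.single_apply, eq_comm]
    using hg (Pi.single i 1) (Pi.single j 1)

theorem Matrix.dotProduct_mulVec_of_transpose_mul_self_eq_one {g : Matrix m m R}
    (hg : gᵀ * g = 1) (v w : m → R) : g *ᵥ v ⬝ᵥ g *ᵥ w = v ⬝ᵥ w := by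
  rw [dotProduct_mulVec, ← vecMul_transpose, vecMul_vecMul, hg, vecMul_one]

theorem LinearIsometry.exists_transpose_mul_self_eq_one
    (L : EuclideanSpace ℝ m →ₗᵢ[ℝ] EuclideanSpace ℝ m) :
    ∃ g : Matrix m m ℝ, gᵀ * g = 1 ∧ ∀ v, g *ᵥ v = (L (WithLp.toLp 2 v)).ofLp := by
  set g := (toLpLin 2 2).symm L.toLinearMap
  have hg v : g *ᵥ v = (L (WithLp.toLp 2 v)).ofLp := by
    rw [← L.coe_toLinearMap, ← (toLpLin 2 2).apply_symm_apply L.toLinearMap, ofLp_toLpLin]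
    rfl
  refine ⟨g, transpose_mul_self_eq_one_of_dotProduct_mulVec fun v w => ?_, hg⟩
  have := L.inner_map_map (WithLp.toLp 2 w) (WithLp.toLp 2 v)
  rwa [EuclideanSpace.inner_eq_star_dotProduct, EuclideanSpace.inner_eq_star_dotProduct,
    star_trivial, star_trivial, ← hg, ← hg] at this

end Orthogonal

theorem Gram_eq_gram {d n : ℕ} (X : Fin n → (Fin d → ℝ)) :
    Gram X = gram ℝ (fun i => WithLp.toLp 2 (X i) : Fin n → EuclideanSpace ℝ (Fin d)) := by
  ext i j
  simp [Gram, gram_apply, EuclideanSpace.inner_eq_star_dotProduct, dotProduct, mul_comm]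

theorem Gram_mulVec_of_transpose_mul_self_eq_one {d n : ℕ} {g : Matrix (Fin d) (Fin d) ℝ} (hg : gᵀ * g = 1)
    (X : Fin n → (Fin d → ℝ)) : Gram (fun i => g *ᵥ X i) = Gram X := by
  ext i j
  exact dotProduct_mulVec_of_transpose_mul_self_eq_one hg (X i) (X j)

theorem exists_transpose_mul_self_eq_one_mulVec_eq_of_Gram_eq {d n : ℕ}
    {X Y : Fin n → (Fin d → ℝ)} (hXY : Gram X = Gram Y) :
    ∃ g : Matrix (Fin d) (Fin d) ℝ, gᵀ * g = 1 ∧ ∀ i, g *ᵥ X i = Y i := by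
  rw [Gram_eq_gram, Gram_eq_gram] at hXY
  obtain ⟨L, hL⟩ := exists_linearIsometry_comp_eq_of_gram_eq hXY
  obtain ⟨g, hg, hgL⟩ := L.exists_transpose_mul_self_eq_one
  exact ⟨g, hg, fun i => (hgL _).trans (congrArg WithLp.ofLp (congrFun hL i))⟩

theorem invariant_iff_function_of_gram (d n : ℕ)
    (h : (Fin n → (Fin d → ℝ)) → ℝ) :
    (∀ g : Matrix (Fin d) (Fin d) ℝ, gᵀ * g = 1 →
      ∀ X : Fin n → (Fin d → ℝ), h (fun i => g.mulVec (X i)) = h X) ↔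
    (∃ f : Matrix (Fin n) (Fin n) ℝ → ℝ,
      ∀ X : Fin n → (Fin d → ℝ), h X = f (Gram X)) := by
  constructor
  · intro hinv
    refine ⟨h ∘ Function.invFun Gram, fun X => ?_⟩
    obtain ⟨g, hg, hgX⟩ :=
      exists_transpose_mul_self_eq_one_mulVec_eq_of_Gram_eq (Function.invFun_eq ⟨X, rfl⟩)
    calc h X = h (fun i => g *ᵥ Function.invFun Gram (Gram X) i) := by simp only [hgX]
      _ = (h ∘ Function.invFun Gram) (Gram X) := hinv g hg _
  · rintro ⟨f, hf⟩ g hg X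
    rw [hf, hf, Gram_mulVec_of_transpose_mul_self_eq_one hg]
end

section
/- If two n-tuples X and Y of vectors in ℝ^d have equal Gram matrices, i.e. ∑ k, X i k * X j k = ∑ k, Y i k * Y j k for all i, j ∈ Fin n, then there exists g in O(d) with Y i = g.mulVec (X i) for every i ∈ Fin n. -/
/-!
Equal Gram matrices give `‖∑ i, c i • w i‖ = ‖∑ i, c i • v i‖` for all coefficients `c`, so
`∑ i, c i • v i ↦ ∑ i, c i • w i` is a well-defined linear isometry from the span of the `v i`.
In finite dimension it extends to a linear isometry of the whole space, and the matrix of such an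
isometry of `ℝᵈ` in the standard basis is orthogonal.
-/

open Matrix

theorem LinearMap.exists_linearIsometry_comp_rangeRestrict_eq {R M E F : Type*} [Ring R]
    [AddCommGroup M] [Module R M] [SeminormedAddCommGroup E] [Module R E]
    [NormedAddCommGroup F] [Module R F] (f : M →ₗ[R] E) (g : M →ₗ[R] F)
    (h : ∀ x, ‖g x‖ = ‖f x‖) :
    ∃ S : range f →ₗᵢ[R] F, ∀ x, S (f.rangeRestrict x) = g x := by
  have hker : ker f ≤ ker g := fun x hx ↦ by
    rw [mem_ker] at hx ⊢
    rw [← norm_eq_zero, h, hx, norm_zero]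
  let S : range f →ₗ[R] F := (ker f).liftQ g hker ∘ₗ f.quotKerEquivRange.symm
  have hS (x : M) : S (f.rangeRestrict x) = g x := by
    simp [S, rangeRestrict, codRestrict, quotKerEquivRange_symm_apply_image]
  refine ⟨⟨S, ?_⟩, hS⟩
  rintro ⟨_, x, rfl⟩
  exact (congrArg norm (hS x)).trans (h x)

theorem Matrix.norm_linearCombination_eq_of_gram_eq {𝕜 ι E F : Type*} [RCLike 𝕜] [Fintype ι]
    [NormedAddCommGroup E] [InnerProductSpace 𝕜 E] [NormedAddCommGroup F]
    [InnerProductSpace 𝕜 F] {v : ι → E} {w : ι → F} (h : gram 𝕜 v = gram 𝕜 w) (c : ι → 𝕜) :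
    ‖Fintype.linearCombination 𝕜 w c‖ = ‖Fintype.linearCombination 𝕜 v c‖ := by
  have hinner := star_dotProduct_gram_mulVec v c c
  rw [h, star_dotProduct_gram_mulVec] at hinner
  rw [Fintype.linearCombination_apply, Fintype.linearCombination_apply,
    norm_eq_sqrt_re_inner (𝕜 := 𝕜), norm_eq_sqrt_re_inner (𝕜 := 𝕜), hinner]

theorem exists_linearIsometryEquiv_apply_eq_of_gram_eq {𝕜 ι E : Type*} [RCLike 𝕜] [Fintype ι]
    [NormedAddCommGroup E] [InnerProductSpace 𝕜 E] [FiniteDimensional 𝕜 E]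
    {v w : ι → E} (h : gram 𝕜 v = gram 𝕜 w) :
    ∃ T : E ≃ₗᵢ[𝕜] E, ∀ i, T (v i) = w i := by
  classical
  obtain ⟨S, hS⟩ := (Fintype.linearCombination 𝕜 v).exists_linearIsometry_comp_rangeRestrict_eq
    (Fintype.linearCombination 𝕜 w) (norm_linearCombination_eq_of_gram_eq h)
  refine ⟨S.extend.toLinearIsometryEquiv rfl, fun i ↦ ?_⟩
  simpa using (S.extend_apply _).trans (hS (Pi.single i 1))

theorem EuclideanSpace.exists_mem_orthogonalGroup_mulVec_eq {ι : Type*} [Fintype ι]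
    [DecidableEq ι] (T : EuclideanSpace ℝ ι ≃ₗᵢ[ℝ] EuclideanSpace ℝ ι) :
    ∃ g ∈ orthogonalGroup ι ℝ, ∀ x, g *ᵥ x = (T (WithLp.toLp 2 x)).ofLp := by
  let b := EuclideanSpace.basisFun ι ℝ
  have hT : toEuclideanLin (LinearMap.toMatrix b.toBasis b.toBasis T) = T := by
    rw [toEuclideanLin_eq_toLin_orthonormal, toLin_toMatrix]
  exact ⟨_, T.toMatrix_mem_unitaryGroup b b,
    fun x ↦ congrArg (fun L ↦ (L (WithLp.toLp 2 x)).ofLp) hT⟩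

theorem EuclideanSpace.gram_toLp_apply {ι n : Type*} [Fintype ι] (X : n → ι → ℝ) (i j : n) :
    gram ℝ (fun i ↦ WithLp.toLp 2 (X i)) i j = ∑ k, X i k * X j k := by
  simp [PiLp.inner_apply, mul_comm]

theorem equal_gram_implies_orthogonal_transform (d n : ℕ)
    (X Y : Fin n → (Fin d → ℝ))
    (hGram : ∀ i j : Fin n, ∑ k, X i k * X j k = ∑ k, Y i k * Y j k) :
    ∃ g : Matrix (Fin d) (Fin d) ℝ, gᵀ * g = 1 ∧ ∀ i, Y i = g.mulVec (X i) := by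
  have hgram : gram ℝ (fun i ↦ WithLp.toLp 2 (X i)) = gram ℝ (fun i ↦ WithLp.toLp 2 (Y i)) := by
    ext i j
    simp only [EuclideanSpace.gram_toLp_apply, hGram]
  obtain ⟨T, hT⟩ := exists_linearIsometryEquiv_apply_eq_of_gram_eq hgram
  obtain ⟨g, hg, hgT⟩ := EuclideanSpace.exists_mem_orthogonalGroup_mulVec_eq T
  exact ⟨g, (mem_orthogonalGroup_iff' _ _).mp hg, fun i ↦ by rw [hgT, hT]⟩
end

section
/- Let h be a continuous O(d)-invariant function from n-tuples of vectors in ℝ^d to ℝ, let K be a compact set of tuples that is O(d)-invariant (g • X ∈ K whenever X ∈ K and g ∈ O(d)), and let ε > 0. Then there exists a real polynomial p in n² variables indexed by Fin n × Fin n such that for every X ∈ K, |h X - p.eval (fun (i, j) => (Gram X) i j)| < ε. -/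
/-!
Two tuples with the same Gram matrix differ by an orthogonal matrix: the map sending one tuple to
the other extends linearly and isometrically from the span of the first tuple to all of `ℝ^d`.
Hence `h` is constant on the fibres of `X ↦ Gram X`, so on the compact set `K` it descends to a
continuous function on the compact image `Gram '' K`. There, Stone–Weierstrass approximates it by
polynomials in the matrix entries, since these separate points.
-/

open Matrix

open Set Topology
open scoped InnerProductSpace

section Isometry

variable {𝕜 E V : Type*} [RCLike 𝕜] [NormedAddCommGroup E] [InnerProductSpace 𝕜 E]
  [FiniteDimensional 𝕜 E] [AddCommGroup V] [Module 𝕜 V]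

theorem exists_linearIsometryEquiv_comp_eq_of_norm_eq (A B : V →ₗ[𝕜] E)
    (hAB : ∀ x, ‖A x‖ = ‖B x‖) : ∃ L : E ≃ₗᵢ[𝕜] E, ∀ x, L (A x) = B x := by
  have hker : LinearMap.ker A ≤ LinearMap.ker B := fun x hx => by
    rw [LinearMap.mem_ker, ← norm_eq_zero, ← hAB, norm_eq_zero, ← LinearMap.mem_ker]
    exact hx
  let T : LinearMap.range A →ₗ[𝕜] E :=
    (LinearMap.ker A).liftQ B hker ∘ₗ A.quotKerEquivRange.symm.toLinearMap
  have hT : ∀ x, T ⟨A x, LinearMap.mem_range_self A x⟩ = B x := fun x => by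
    simp [T, A.quotKerEquivRange_symm_apply_image x]
  let T' : LinearMap.range A →ₗᵢ[𝕜] E :=
    ⟨T, by rintro ⟨_, x, rfl⟩; exact (congrArg norm (hT x)).trans (hAB x).symm⟩
  refine ⟨T'.extend.toLinearIsometryEquiv rfl, fun x => ?_⟩
  exact (T'.extend_apply ⟨A x, LinearMap.mem_range_self A x⟩).trans (hT x)

omit [FiniteDimensional 𝕜 E] in
theorem norm_linearCombination_eq_of_inner_eq {ι : Type*} [Fintype ι] {v w : ι → E}
    (h : ∀ i j, ⟪v i, v j⟫_𝕜 = ⟪w i, w j⟫_𝕜) (c : ι → 𝕜) :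
    ‖Fintype.linearCombination 𝕜 v c‖ = ‖Fintype.linearCombination 𝕜 w c‖ := by
  have hinner : ⟪Fintype.linearCombination 𝕜 v c, Fintype.linearCombination 𝕜 v c⟫_𝕜 =
      ⟪Fintype.linearCombination 𝕜 w c, Fintype.linearCombination 𝕜 w c⟫_𝕜 := by
    simp only [Fintype.linearCombination_apply, sum_inner, inner_sum, inner_smul_left,
      inner_smul_right, h]
  rw [← sq_eq_sq₀ (norm_nonneg _) (norm_nonneg _), @norm_sq_eq_re_inner 𝕜,
    @norm_sq_eq_re_inner 𝕜, hinner]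

theorem exists_linearIsometryEquiv_of_inner_eq {ι : Type*} [Fintype ι] {v w : ι → E}
    (h : ∀ i j, ⟪v i, v j⟫_𝕜 = ⟪w i, w j⟫_𝕜) : ∃ L : E ≃ₗᵢ[𝕜] E, ∀ i, L (v i) = w i := by
  classical
  obtain ⟨L, hL⟩ := exists_linearIsometryEquiv_comp_eq_of_norm_eq
    (Fintype.linearCombination 𝕜 v) (Fintype.linearCombination 𝕜 w)
    (norm_linearCombination_eq_of_inner_eq h)
  refine ⟨L, fun i => ?_⟩
  simpa using hL (Pi.single i 1)

end Isometry

theorem LinearIsometryEquiv.exists_orthogonal_mulVec_eq {ι : Type*} [Fintype ι] [DecidableEq ι]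
    (L : EuclideanSpace ℝ ι ≃ₗᵢ[ℝ] EuclideanSpace ℝ ι) :
    ∃ g : Matrix ι ι ℝ, gᵀ * g = 1 ∧ ∀ x, g *ᵥ x = (L (WithLp.toLp 2 x)).ofLp := by
  let b := (EuclideanSpace.basisFun ι ℝ).toBasis
  have hg := mem_unitaryGroup_iff'.mp (L.toMatrix_mem_unitaryGroup
    (EuclideanSpace.basisFun ι ℝ) (EuclideanSpace.basisFun ι ℝ))
  rw [star_eq_conjTranspose, conjTranspose_eq_transpose_of_trivial] at hg
  refine ⟨LinearMap.toMatrix b b L.toLinearMap, hg, fun x => ?_⟩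
  have hrepr : ∀ y, ⇑(b.repr y) = y.ofLp := fun y => rfl
  simpa [hrepr] using LinearMap.toMatrix_mulVec_repr b b L.toLinearMap (WithLp.toLp 2 x)

theorem gram_eq_gram_toLp {d n : ℕ} (X : Fin n → Fin d → ℝ) :
    Gram X = gram ℝ fun i => WithLp.toLp 2 (X i) := by
  ext i j
  simp [Gram, gram, PiLp.inner_apply, mul_comm]

theorem exists_orthogonal_mulVec_eq_of_gram_eq {d n : ℕ} {X Y : Fin n → Fin d → ℝ}
    (h : Gram X = Gram Y) : ∃ g : Matrix (Fin d) (Fin d) ℝ, gᵀ * g = 1 ∧ ∀ i, g *ᵥ X i = Y i := by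
  rw [gram_eq_gram_toLp, gram_eq_gram_toLp] at h
  obtain ⟨L, hL⟩ := exists_linearIsometryEquiv_of_inner_eq fun i j => by
    simpa only [gram, of_apply] using congrFun (congrFun h i) j
  obtain ⟨g, hg, hgL⟩ := L.exists_orthogonal_mulVec_eq
  exact ⟨g, hg, fun i => by rw [hgL, hL]⟩

theorem continuous_gram {d n : ℕ} :
    Continuous (Gram : (Fin n → Fin d → ℝ) → Matrix (Fin n) (Fin n) ℝ) := by
  unfold Gram
  fun_prop

namespace MvPolynomial

variable {σ R : Type*} [CommSemiring R] [TopologicalSpace R] [IsTopologicalSemiring R]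

noncomputable def toContinuousMapOnAlgHom (S : Set (σ → R)) : MvPolynomial σ R →ₐ[R] C(S, R) where
  toFun p := ⟨fun x => eval (x : σ → R) p, (continuous_eval p).comp continuous_subtype_val⟩
  map_one' := by ext; simp
  map_mul' _ _ := by ext; simp
  map_zero' := by ext; simp
  map_add' _ _ := by ext; simp
  commutes' _ := by ext; simp

@[simp]
theorem toContinuousMapOnAlgHom_apply (S : Set (σ → R)) (p : MvPolynomial σ R) (x : S) :
    toContinuousMapOnAlgHom S p x = eval (x : σ → R) p :=
  rfl

theorem toContinuousMapOnAlgHom_range_separatesPoints (S : Set (σ → R)) :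
    (toContinuousMapOnAlgHom S).range.SeparatesPoints := by
  intro x y hxy
  obtain ⟨i, hi⟩ := Function.ne_iff.mp (Subtype.coe_ne_coe.mpr hxy)
  exact ⟨_, ⟨_, ⟨X i, rfl⟩, rfl⟩, by simpa using hi⟩

theorem exists_forall_abs_sub_eval_lt_of_isCompact {S : Set (σ → ℝ)} (hS : IsCompact S)
    (f : C(S, ℝ)) {ε : ℝ} (hε : 0 < ε) :
    ∃ p : MvPolynomial σ ℝ, ∀ x : S, |f x - eval (x : σ → ℝ) p| < ε := by
  have := isCompact_iff_compactSpace.mp hS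
  obtain ⟨⟨_, p, rfl⟩, hp⟩ := ContinuousMap.exists_mem_subalgebra_near_continuous_of_separatesPoints
    _ (toContinuousMapOnAlgHom_range_separatesPoints S) f f.continuous ε hε
  exact ⟨p, fun x => by simpa [abs_sub_comm] using hp x⟩

theorem exists_forall_abs_sub_eval_comp_lt {X : Type*} [TopologicalSpace X] {K : Set X}
    (hK : IsCompact K) {φ : X → σ → ℝ} (hφ : ContinuousOn φ K) {f : X → ℝ}
    (hf : ContinuousOn f K) (hfφ : ∀ x ∈ K, ∀ y ∈ K, φ x = φ y → f x = f y)
    {ε : ℝ} (hε : 0 < ε) :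
    ∃ p : MvPolynomial σ ℝ, ∀ x ∈ K, |f x - eval (φ x) p| < ε := by
  have := isCompact_iff_compactSpace.mp hK
  let q : C(K, φ '' K) := ⟨K.imageFactorization φ, hφ.mapsToRestrict (mapsTo_image φ K)⟩
  have hq : IsQuotientMap q := q.continuous.isClosedMap.isQuotientMap q.continuous
    imageFactorization_surjective
  let g : C(K, ℝ) := ⟨K.domRestrict f, hf.domRestrict⟩
  have hg : Function.FactorsThrough g q := fun x y hxy =>
    hfφ x x.2 y y.2 (congrArg Subtype.val hxy)
  obtain ⟨p, hp⟩ := exists_forall_abs_sub_eval_lt_of_isCompact (hK.image_of_continuousOn hφ)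
    (hq.lift g hg) hε
  refine ⟨p, fun x hx => ?_⟩
  have hFq : hq.lift g hg (q ⟨x, hx⟩) = f x := DFunLike.congr_fun (hq.lift_comp g hg) ⟨x, hx⟩
  exact hFq ▸ hp (q ⟨x, hx⟩)

end MvPolynomial

theorem invariant_scalar_polynomial_approximation_general (d n : ℕ)
    (h : (Fin n → (Fin d → ℝ)) → ℝ) (hc : Continuous h)
    (hinv : ∀ g : Matrix (Fin d) (Fin d) ℝ, gᵀ * g = 1 →
      ∀ X : Fin n → (Fin d → ℝ), h (fun i => g.mulVec (X i)) = h X)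
    (K : Set (Fin n → (Fin d → ℝ))) (hK : IsCompact K)
    (ε : ℝ) (hε : 0 < ε) :
    ∃ p : MvPolynomial (Fin n × Fin n) ℝ,
      ∀ X ∈ K,
        |h X - MvPolynomial.eval (fun ij : Fin n × Fin n => Gram X ij.1 ij.2) p| < ε := by
  have hfiber : ∀ X Y, Gram X = Gram Y → h X = h Y := fun X Y hXY => by
    obtain ⟨g, hg, hgXY⟩ := exists_orthogonal_mulVec_eq_of_gram_eq hXY
    rw [← hinv g hg X]
    simp_rw [hgXY]
  have hentries : Continuous fun X : Fin n → Fin d → ℝ => fun ij : Fin n × Fin n =>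
      Gram X ij.1 ij.2 :=
    continuous_pi fun ij => (continuous_apply_apply ij.1 ij.2).comp continuous_gram
  exact MvPolynomial.exists_forall_abs_sub_eval_comp_lt hK hentries.continuousOn hc.continuousOn
    (fun X _ Y _ hXY => hfiber X Y (Matrix.ext fun i j => congrFun hXY (i, j))) hε

theorem invariant_scalar_polynomial_approximation (d n : ℕ)
    (h : (Fin n → (Fin d → ℝ)) → ℝ) (hc : Continuous h)
    (hinv : ∀ g : Matrix (Fin d) (Fin d) ℝ, gᵀ * g = 1 →
      ∀ X : Fin n → (Fin d → ℝ), h (fun i => g.mulVec (X i)) = h X)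
    (K : Set (Fin n → (Fin d → ℝ))) (hK : IsCompact K)
    (hKinv : ∀ g : Matrix (Fin d) (Fin d) ℝ, gᵀ * g = 1 →
      ∀ X ∈ K, (fun i => g.mulVec (X i)) ∈ K)
    (ε : ℝ) (hε : 0 < ε) :
    ∃ p : MvPolynomial (Fin n × Fin n) ℝ,
      ∀ X ∈ K,
        |h X - MvPolynomial.eval (fun ij : Fin n × Fin n => Gram X ij.1 ij.2) p| < ε :=
  invariant_scalar_polynomial_approximation_general d n h hc hinv K hK ε hε
end

section
/- Let G be a finite group with group homomorphisms ρX from G to O(n) and ρY from G to O(m), let h : (Fin n → ℝ) → (Fin m → ℝ) be G-equivariant (h ((ρX g).mulVec x) = (ρY g).mulVec (h x) for all g, x), and let f : (Fin n → ℝ) → (Fin m → ℝ) be any function. Then for every x, the Euclidean norm of (S f) x - h x is at most the maximum over g ∈ G of the Euclidean norm of f ((ρX g)⁻¹.mulVec x) - h ((ρX g)⁻¹.mulVec x), where (S f) x = (|G| : ℝ)⁻¹ • ∑ g ∈ G, (ρY g).mulVec (f ((ρX g)⁻¹.mulVec x)). -/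
/-!
Since `h` is equivariant, `h x = ρY g (h ((ρX g)⁻¹ x))` for every `g`, so `h x` is itself the
group average of these terms and `S f x - h x` is the average of the vectors
`ρY g (f y_g - h y_g)` with `y_g = (ρX g)⁻¹ x`. The matrices `ρY g` are orthogonal, hence do not
change Euclidean norms, and the norm of an average is at most the largest norm of its terms.
-/

open Matrix

noncomputable def euclNorm {m : ℕ} (v : Fin m → ℝ) : ℝ :=
  Real.sqrt (∑ k, (v k) ^ 2)

section Average

variable {ι E : Type*} [Fintype ι]

lemma inv_card_smul_sum_sub [Nonempty ι] [AddCommGroup E] [Module ℝ E] (v : ι → E) (w : E) :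
    (Fintype.card ι : ℝ)⁻¹ • ∑ i, v i - w = (Fintype.card ι : ℝ)⁻¹ • ∑ i, (v i - w) := by
  have hcard : (Fintype.card ι : ℝ) ≠ 0 := Nat.cast_ne_zero.mpr Fintype.card_ne_zero
  rw [Finset.sum_sub_distrib, smul_sub, Finset.sum_const, Finset.card_univ,
    ← Nat.cast_smul_eq_nsmul ℝ, smul_smul, inv_mul_cancel₀ hcard, one_smul]

lemma norm_inv_card_smul_sum_le_sup' [Nonempty ι] [SeminormedAddCommGroup E] [NormedSpace ℝ E]
    (v : ι → E) :
    ‖(Fintype.card ι : ℝ)⁻¹ • ∑ i, v i‖ ≤ Finset.univ.sup' Finset.univ_nonempty (‖v ·‖) := by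
  set M := Finset.univ.sup' Finset.univ_nonempty (‖v ·‖)
  have hcard : (0 : ℝ) < Fintype.card ι := Nat.cast_pos.mpr Fintype.card_pos
  have hsum : ‖∑ i, v i‖ ≤ Fintype.card ι * M := calc
    ‖∑ i, v i‖ ≤ ∑ i, ‖v i‖ := norm_sum_le _ _
    _ ≤ ∑ _i : ι, M := Finset.sum_le_sum fun i hi => Finset.le_sup' (‖v ·‖) hi
    _ = Fintype.card ι * M := by simp
  rw [norm_smul, norm_inv, Real.norm_natCast, inv_mul_le_iff₀ hcard]
  exact hsum

end Average

section EuclNorm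

variable {m : ℕ}

lemma euclNorm_eq_norm_toLp (v : Fin m → ℝ) : euclNorm v = ‖WithLp.toLp 2 v‖ := by
  simp [euclNorm, EuclideanSpace.norm_eq]

lemma euclNorm_eq_sqrt_dotProduct (v : Fin m → ℝ) : euclNorm v = √(v ⬝ᵥ v) := by
  simp [euclNorm, dotProduct, sq]

lemma euclNorm_mulVec_of_mem_orthogonalGroup {U : Matrix (Fin m) (Fin m) ℝ}
    (hU : U ∈ orthogonalGroup (Fin m) ℝ) (v : Fin m → ℝ) : euclNorm (U *ᵥ v) = euclNorm v := by
  have hUU : Uᵀ * U = 1 := by simpa using (mem_orthogonalGroup_iff' (Fin m) ℝ).mp hU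
  rw [euclNorm_eq_sqrt_dotProduct, euclNorm_eq_sqrt_dotProduct, dotProduct_mulVec,
    ← mulVec_transpose, mulVec_mulVec, hUU, one_mulVec]

lemma euclNorm_inv_card_smul_sum_le_sup' {ι : Type*} [Fintype ι] [Nonempty ι]
    (v : ι → Fin m → ℝ) :
    euclNorm ((Fintype.card ι : ℝ)⁻¹ • ∑ i, v i) ≤
      Finset.univ.sup' Finset.univ_nonempty (fun i => euclNorm (v i)) := by
  simp_rw [euclNorm_eq_norm_toLp, WithLp.toLp_smul, WithLp.toLp_sum]
  exact norm_inv_card_smul_sum_le_sup' _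

end EuclNorm

lemma mulVec_apply_inv_mulVec_of_intertwines {n m : ℕ} {U : Matrix (Fin n) (Fin n) ℝ}
    {V : Matrix (Fin m) (Fin m) ℝ} {h : (Fin n → ℝ) → (Fin m → ℝ)} (hU : IsUnit U.det)
    (hh : ∀ y, h (U *ᵥ y) = V *ᵥ h y) (x : Fin n → ℝ) : V *ᵥ h (U⁻¹ *ᵥ x) = h x := by
  rw [← hh, mulVec_mulVec, mul_nonsing_inv U hU, one_mulVec]

theorem symmetrization_error_bound (n m : ℕ)
    (G : Type*) [Group G] [Fintype G]
    (ρX : G →* Matrix.orthogonalGroup (Fin n) ℝ)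
    (ρY : G →* Matrix.orthogonalGroup (Fin m) ℝ)
    (h : (Fin n → ℝ) → (Fin m → ℝ))
    (hequiv : ∀ (g : G) (x : Fin n → ℝ),
      h ((ρX g : Matrix (Fin n) (Fin n) ℝ).mulVec x) =
        (ρY g : Matrix (Fin m) (Fin m) ℝ).mulVec (h x))
    (f : (Fin n → ℝ) → (Fin m → ℝ))
    (S : ((Fin n → ℝ) → (Fin m → ℝ)) → ((Fin n → ℝ) → (Fin m → ℝ)))
    (hS : ∀ x : Fin n → ℝ,
      S f x = (Fintype.card G : ℝ)⁻¹ •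
        ∑ g : G, ((ρY g : Matrix (Fin m) (Fin m) ℝ)).mulVec
          (f (((ρX g)⁻¹ : Matrix (Fin n) (Fin n) ℝ).mulVec x))) :
    ∀ x : Fin n → ℝ,
      euclNorm (S f x - h x) ≤
        Finset.univ.sup' Finset.univ_nonempty (fun g : G =>
          euclNorm (f (((ρX g)⁻¹ : Matrix (Fin n) (Fin n) ℝ).mulVec x) -
            h (((ρX g)⁻¹ : Matrix (Fin n) (Fin n) ℝ).mulVec x))) := by
  intro x
  have h_eq (g : G) : (ρY g : Matrix (Fin m) (Fin m) ℝ) *ᵥ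
      h ((ρX g : Matrix (Fin n) (Fin n) ℝ)⁻¹ *ᵥ x) = h x :=
    mulVec_apply_inv_mulVec_of_intertwines (UnitaryGroup.det_isUnit (ρX g)) (hequiv g) x
  have h_diff : S f x - h x = (Fintype.card G : ℝ)⁻¹ • ∑ g : G,
      (ρY g : Matrix (Fin m) (Fin m) ℝ) *ᵥ (f ((ρX g : Matrix (Fin n) (Fin n) ℝ)⁻¹ *ᵥ x) -
        h ((ρX g : Matrix (Fin n) (Fin n) ℝ)⁻¹ *ᵥ x)) := by
    simp_rw [hS, inv_card_smul_sum_sub, mulVec_sub, h_eq]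
  rw [h_diff]
  refine (euclNorm_inv_card_smul_sum_le_sup' _).trans_eq ?_
  simp_rw [euclNorm_mulVec_of_mem_orthogonalGroup (ρY _).2]
end
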